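/- arXiv:2003.01160 — 3 statements merged into one kernel-verified Lean document; each statement's English description precedes it below -/
import Mathlib

section
/- Let X be a finite set and Q an irreducible, reversible Markov kernel on X with stationary measure π, and let θ be the logarithmic mean. Assume the global gradient estimate with constant κ holds: for all probability densities ρ ∈ D(X), all f : X → ℝ and all t ≥ 0, (1/2)·Σ_{u,v} (P_t f(v) − P_t f(u))² θ(ρ(u),ρ(v)) Q(u,v) π(u) ≤ e^{−2κt} · (1/2)·Σ_{u,v} (f(v) − f(u))² θ(P_t ρ(u), P_t ρ(v)) Q(u,v) π(u). Then for every x ∈ X, every f : X → ℝ, every t ≥ 0 and every ε > 0, one has Γ(P_t f)(x)·π(x) ≤ (e^{−2κt}/(2θ(1,ε))) · [ P_t Γ(f)(x)·π(x) + ε · Σ_{y ∈ N(x)} P_t Γ(f)(y)·π(y) ], where N(x) = {y : Q(x,y) > 0}. -/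
/-!
Test the global estimate against the density `ρ` that equals `1` at `x` and `ε` at the other
neighbours of `x`, normalised by its mass `Z`. Since `θ` is homogeneous,
`θ(ρ x, ρ y) = θ(1, ε) / Z` for every neighbour `y`, so the terms in row and column `x` of the
Dirichlet form on the left already give `Γ(P_t f)(x) π(x) θ(1, ε) / Z`. On the right, `θ` is at
most the arithmetic mean, so by reversibility the Dirichlet form is at most
`½ ∑ P_tρ · Γf · π = ½ ∑ ρ · P_tΓf · π` (`P_t` is self-adjoint in `L²(π)`), which is at most
`[P_tΓf(x) π(x) + ε ∑_{y ∈ N(x)} P_tΓf(y) π(y)] / (2Z)`. The mass `Z` cancels.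
-/

/-- The logarithmic mean: `θ(a,b) = (a-b)/(log a - log b)` for distinct positive `a,b`,
`θ(a,a) = a`, and `θ(a,b) = 0` when `a = 0` or `b = 0`. -/
noncomputable def logMean (a b : ℝ) : ℝ :=
  if a = 0 ∨ b = 0 then 0
  else if a = b then a
  else (a - b) / (Real.log a - Real.log b)

/-- The discrete Laplacian `Δf(x) = Σ_y (f(y)-f(x)) Q(x,y)`. -/
noncomputable def lap {X : Type*} [Fintype X] (Q : X → X → ℝ) (f : X → ℝ) (x : X) : ℝ :=
  ∑ y, (f y - f x) * Q x y

/-- The heat semigroup `P_t = e^{tΔ}`, realized via the matrix exponential of `t•(Q - I)`.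
(When `Σ_y Q(x,y) = 1`, the matrix `Q - I` acts on functions exactly as `Δ` does.) -/
noncomputable def heat {X : Type*} [Fintype X] [DecidableEq X] (Q : X → X → ℝ) (t : ℝ)
    (f : X → ℝ) : X → ℝ :=
  (NormedSpace.exp (t • (Matrix.of fun x y => Q x y - if x = y then (1 : ℝ) else 0))).mulVec f

/-- The carré du champ operator `Γ(f)(x) = Σ_y (f(y)-f(x))² Q(x,y)`. -/
noncomputable def gam {X : Type*} [Fintype X] (Q : X → X → ℝ) (f : X → ℝ) (x : X) : ℝ :=
  ∑ y, (f y - f x) ^ 2 * Q x y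

open Finset
open scoped Matrix

lemma Real.two_mul_sub_div_add_le_log_sub_log {a b : ℝ} (ha : 0 < a) (hab : a ≤ b) :
    2 * (b - a) / (b + a) ≤ Real.log b - Real.log a := by
  have hb : 0 < b := ha.trans_le hab
  have hba : b + a ≠ 0 := by positivity
  set y := (b - a) / (b + a)
  have hy0 : 0 ≤ y := div_nonneg (by linarith) (by positivity)
  have hy1 : |y| < 1 := by
    rw [abs_of_nonneg hy0, div_lt_one (by linarith)]
    linarith
  have hy1' : 1 - y ≠ 0 := by linarith [abs_lt.mp hy1]
  have hlog : Real.log (1 + y) - Real.log (1 - y) = Real.log b - Real.log a := by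
    rw [← Real.log_div (by linarith) hy1', ← Real.log_div hb.ne' ha.ne']
    congr 1
    rw [div_eq_div_iff hy1' ha.ne']
    simp only [y]
    field_simp
    ring
  -- `2 y` is the first term of `log (1 + y) - log (1 - y) = 2 ∑ y ^ (2k+1) / (2k+1)`.
  rw [← hlog]
  simpa [y, mul_div_assoc] using le_hasSum (hasSum_log_sub_log_of_abs_lt_one hy1) 0
    fun k _ => by positivity

lemma logMean_comm (a b : ℝ) : logMean a b = logMean b a := by
  unfold logMean
  rcases eq_or_ne a b with rfl | hab
  · rfl
  · rw [if_neg hab, if_neg hab.symm, ← neg_sub b a, ← neg_sub (Real.log b), neg_div_neg_eq]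
    simp only [or_comm]

lemma logMean_self (a : ℝ) : logMean a a = a := by
  by_cases ha : a = 0 <;> simp [logMean, ha]

lemma logMean_pos {a b : ℝ} (ha : 0 < a) (hb : 0 < b) : 0 < logMean a b := by
  wlog hab : a ≤ b generalizing a b
  · rw [logMean_comm]; exact this hb ha (le_of_not_ge hab)
  rcases hab.eq_or_lt with rfl | hab
  · rwa [logMean_self]
  rw [logMean, if_neg (by simp [ha.ne', hb.ne']), if_neg hab.ne]
  exact div_pos_of_neg_of_neg (by linarith) (by linarith [Real.log_lt_log ha hab])

lemma logMean_nonneg {a b : ℝ} (ha : 0 ≤ a) (hb : 0 ≤ b) : 0 ≤ logMean a b := by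
  rcases ha.eq_or_lt with rfl | ha
  · simp [logMean]
  rcases hb.eq_or_lt with rfl | hb
  · simp [logMean]
  exact (logMean_pos ha hb).le

lemma logMean_mul_mul {c : ℝ} (hc : c ≠ 0) (a b : ℝ) :
    logMean (c * a) (c * b) = c * logMean a b := by
  by_cases h0 : a = 0 ∨ b = 0
  · rcases h0 with rfl | rfl <;> simp [logMean]
  obtain ⟨ha, hb⟩ := not_or.mp h0
  rcases eq_or_ne a b with rfl | hab
  · simp only [logMean_self]
  rw [logMean, logMean, if_neg h0, if_neg hab, if_neg (by simp [hc, ha, hb]),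
    if_neg (by simpa [hc] using hab), Real.log_mul hc ha, Real.log_mul hc hb]
  ring

lemma logMean_le_add_div_two {a b : ℝ} (ha : 0 ≤ a) (hb : 0 ≤ b) :
    logMean a b ≤ (a + b) / 2 := by
  wlog hab : a ≤ b generalizing a b
  · rw [logMean_comm, add_comm]; exact this hb ha (le_of_not_ge hab)
  rcases ha.eq_or_lt with rfl | ha
  · rw [show logMean 0 b = 0 by simp [logMean]]
    linarith
  rcases hab.eq_or_lt with rfl | hab
  · rw [logMean_self]; linarith
  have hlog : 0 < Real.log b - Real.log a := by linarith [Real.log_lt_log ha hab]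
  have key := Real.two_mul_sub_div_add_le_log_sub_log ha hab.le
  rw [logMean, if_neg (by simp [ha.ne', (ha.trans hab).ne']), if_neg hab.ne,
    ← neg_div_neg_eq, neg_sub, neg_sub, div_le_div_iff₀ hlog two_pos]
  rw [div_le_iff₀ (by linarith)] at key
  linarith

namespace Matrix

variable {X : Type*} [Fintype X] [DecidableEq X]

lemma exp_apply_nonneg {M : Matrix X X ℝ} (hM : ∀ i j, 0 ≤ M i j) (i j : X) :
    0 ≤ NormedSpace.exp M i j := by
  -- Summing the exponential series needs some norm on matrices; any one will do.
  open scoped Norms.Operator in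
  have hsum := Pi.hasSum.mp (Pi.hasSum.mp (NormedSpace.exp_series_hasSum_exp' (𝕂 := ℝ) M) i) j
  refine hasSum_le (fun n => ?_) hasSum_zero hsum
  exact mul_nonneg (by positivity) (pow_apply_nonneg hM n i j)

lemma exp_add_smul_one (M : Matrix X X ℝ) (c : ℝ) :
    NormedSpace.exp (M + c • 1) = Real.exp c • NormedSpace.exp M := by
  rw [exp_add_of_commute _ _ ((Commute.one_right M).smul_right c), smul_one_eq_diagonal,
    exp_diagonal, Pi.exp_def, ← Real.exp_eq_exp_ℝ, ← smul_one_eq_diagonal, mul_smul_one]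

lemma exp_detailed_balance {M : Matrix X X ℝ} {π : X → ℝ}
    (hM : ∀ i j, π i * M i j = π j * M j i) (i j : X) :
    π i * NormedSpace.exp M i j = π j * NormedSpace.exp M j i := by
  have hsemi : SemiconjBy (diagonal π) M Mᵀ := by
    ext i j
    simp [hM i j, mul_comm]
  have hexp : SemiconjBy (diagonal π) (NormedSpace.exp M) (NormedSpace.exp Mᵀ) := by
    open scoped Norms.Operator in exact hsemi.exp_right
  have := congrFun₂ hexp i j
  rw [exp_transpose] at this
  simpa [mul_comm] using this

end Matrix

lemma Matrix.sum_mulVec_mul_mul_eq {X : Type*} [Fintype X] {E : Matrix X X ℝ} {π : X → ℝ}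
    (hE : ∀ i j, π i * E i j = π j * E j i) (ρ g : X → ℝ) :
    ∑ u, (E *ᵥ ρ) u * g u * π u = ∑ u, ρ u * (E *ᵥ g) u * π u := by
  simp only [Matrix.mulVec, dotProduct, sum_mul, mul_sum]
  rw [sum_comm]
  refine sum_congr rfl fun u _ => sum_congr rfl fun v _ => ?_
  linear_combination (ρ u * g v) * hE v u

section Heat

variable {X : Type*} [Fintype X] [DecidableEq X] {Q : X → X → ℝ}

noncomputable def markovGenerator (Q : X → X → ℝ) : Matrix X X ℝ :=
  Matrix.of fun x y => Q x y - if x = y then 1 else 0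

lemma exp_smul_markovGenerator_apply_nonneg (hQ : ∀ x y, 0 ≤ Q x y) {t : ℝ} (ht : 0 ≤ t)
    (i j : X) : 0 ≤ NormedSpace.exp (t • markovGenerator Q) i j := by
  have hsplit : t • markovGenerator Q = t • Matrix.of Q + (-t) • 1 := by
    ext a b
    simp only [markovGenerator, Matrix.add_apply, Matrix.smul_apply, Matrix.of_apply,
      Matrix.one_apply, smul_eq_mul]
    split_ifs <;> ring
  rw [hsplit, Matrix.exp_add_smul_one, Matrix.smul_apply, smul_eq_mul]
  exact mul_nonneg (Real.exp_pos _).le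
    (Matrix.exp_apply_nonneg (fun a b => mul_nonneg ht (hQ a b)) i j)

lemma exp_smul_markovGenerator_detailed_balance {π : X → ℝ}
    (hrev : ∀ x y, Q x y * π x = Q y x * π y) (t : ℝ) (i j : X) :
    π i * NormedSpace.exp (t • markovGenerator Q) i j =
      π j * NormedSpace.exp (t • markovGenerator Q) j i := by
  refine Matrix.exp_detailed_balance (fun a b => ?_) i j
  rcases eq_or_ne a b with rfl | hab
  · rfl
  · simp only [markovGenerator, Matrix.smul_apply, Matrix.of_apply, if_neg hab, if_neg hab.symm,
      smul_eq_mul]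
    linear_combination t * hrev a b

lemma heat_nonneg (hQ : ∀ x y, 0 ≤ Q x y) {t : ℝ} (ht : 0 ≤ t) {f : X → ℝ}
    (hf : ∀ y, 0 ≤ f y) (x : X) : 0 ≤ heat Q t f x :=
  sum_nonneg fun y _ => mul_nonneg (exp_smul_markovGenerator_apply_nonneg hQ ht x y) (hf y)

lemma sum_heat_mul_mul_eq {π : X → ℝ} (hrev : ∀ x y, Q x y * π x = Q y x * π y) (t : ℝ)
    (ρ g : X → ℝ) : ∑ u, heat Q t ρ u * g u * π u = ∑ u, ρ u * heat Q t g u * π u :=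
  Matrix.sum_mulVec_mul_mul_eq (exp_smul_markovGenerator_detailed_balance hrev t) ρ g

end Heat

lemma sum_row_add_sum_col_le {X : Type*} [Fintype X] {T : X → X → ℝ}
    (hT : ∀ u v, 0 ≤ T u v) (x : X) :
    ∑ v, T x v + ∑ u, T u x ≤ ∑ u, ∑ v, T u v + T x x := by
  classical
  have hrow := add_sum_erase univ (fun u => ∑ v, T u v) (mem_univ x)
  have hcol := add_sum_erase univ (fun u => T u x) (mem_univ x)
  have hrest : ∑ u ∈ univ.erase x, T u x ≤ ∑ u ∈ univ.erase x, ∑ v, T u v :=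
    sum_le_sum fun u _ => single_le_sum (fun v _ => hT u v) (mem_univ x)
  linarith

lemma gam_nonneg {X : Type*} [Fintype X] {Q : X → X → ℝ} (hQ : ∀ x y, 0 ≤ Q x y) (f : X → ℝ)
    (x : X) : 0 ≤ gam Q f x :=
  sum_nonneg fun y _ => mul_nonneg (sq_nonneg _) (hQ x y)

section Energy

variable {X : Type*} [Fintype X] {Q : X → X → ℝ} {π : X → ℝ}

noncomputable def logMeanEnergy (Q : X → X → ℝ) (π ρ f : X → ℝ) : ℝ :=
  (1 / 2) * ∑ u, ∑ v, (f v - f u) ^ 2 * logMean (ρ u) (ρ v) * Q u v * π u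

lemma gam_mul_mul_le_logMeanEnergy (hQ : ∀ x y, 0 ≤ Q x y) (hπ : ∀ x, 0 ≤ π x)
    (hrev : ∀ x y, Q x y * π x = Q y x * π y) {ρ : X → ℝ} (hρ : ∀ x, 0 ≤ ρ x) {x : X} {c : ℝ}
    (hc : ∀ y, y ≠ x → 0 < Q x y → logMean (ρ x) (ρ y) = c) (g : X → ℝ) :
    gam Q g x * π x * c ≤ logMeanEnergy Q π ρ g := by
  set T : X → X → ℝ := fun u v => (g v - g u) ^ 2 * logMean (ρ u) (ρ v) * Q u v * π u
  have hT : ∀ u v, 0 ≤ T u v := fun u v =>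
    mul_nonneg (mul_nonneg (mul_nonneg (sq_nonneg _) (logMean_nonneg (hρ u) (hρ v))) (hQ u v))
      (hπ u)
  have hcol : ∑ u, T u x = ∑ v, T x v := sum_congr rfl fun u _ => by
    simp only [T, logMean_comm (ρ u)]
    linear_combination ((g x - g u) ^ 2 * logMean (ρ x) (ρ u)) * hrev u x
  have hrow : ∑ v, T x v = gam Q g x * π x * c := by
    simp only [gam, sum_mul]
    refine sum_congr rfl fun y _ => ?_
    by_cases hy : y = x
    · simp [T, hy]
    rcases (hQ x y).lt_or_eq with hxy | hxy
    · simp only [T, hc y hy hxy]; ring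
    · simp [T, ← hxy]
  have hdiag : T x x = 0 := by simp [T]
  have := sum_row_add_sum_col_le hT x
  rw [hcol, hrow, hdiag] at this
  change _ ≤ 1 / 2 * ∑ u, ∑ v, T u v
  linarith

lemma logMeanEnergy_le_half_sum_mul_gam (hQ : ∀ x y, 0 ≤ Q x y) (hπ : ∀ x, 0 ≤ π x)
    (hrev : ∀ x y, Q x y * π x = Q y x * π y) {ρ : X → ℝ} (hρ : ∀ x, 0 ≤ ρ x) (f : X → ℝ) :
    logMeanEnergy Q π ρ f ≤ (1 / 2) * ∑ u, ρ u * gam Q f u * π u := by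
  have hmean : ∑ u, ∑ v, (f v - f u) ^ 2 * logMean (ρ u) (ρ v) * Q u v * π u ≤
      ∑ u, ∑ v, (f v - f u) ^ 2 * ((ρ u + ρ v) / 2) * Q u v * π u :=
    sum_le_sum fun u _ => sum_le_sum fun v _ => by
      gcongr
      exacts [hπ u, hQ u v, logMean_le_add_div_two (hρ u) (hρ v)]
  have hswap : ∑ u, ∑ v, (f v - f u) ^ 2 * ρ v * Q u v * π u =
      ∑ u, ∑ v, (f v - f u) ^ 2 * ρ u * Q u v * π u := by
    rw [sum_comm]
    refine sum_congr rfl fun u _ => sum_congr rfl fun v _ => ?_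
    linear_combination ((f v - f u) ^ 2 * ρ u) * hrev v u
  have hgam : ∑ u, ∑ v, (f v - f u) ^ 2 * ρ u * Q u v * π u = ∑ u, ρ u * gam Q f u * π u :=
    sum_congr rfl fun u _ => by
      simp only [gam, mul_sum, sum_mul]
      exact sum_congr rfl fun v _ => by ring
  have hsplit : ∑ u, ∑ v, (f v - f u) ^ 2 * ((ρ u + ρ v) / 2) * Q u v * π u =
      (∑ u, ∑ v, (f v - f u) ^ 2 * ρ u * Q u v * π u +
        ∑ u, ∑ v, (f v - f u) ^ 2 * ρ v * Q u v * π u) / 2 := by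
    simp only [← sum_add_distrib, sum_div]
    exact sum_congr rfl fun u _ => sum_congr rfl fun v _ => by ring
  rw [logMeanEnergy]
  linarith

end Energy

section LocalDensity

variable {X : Type*} [DecidableEq X] {Q : X → X → ℝ} {x : X} {ε : ℝ}

noncomputable def localBump (Q : X → X → ℝ) (x : X) (ε : ℝ) (z : X) : ℝ :=
  if z = x then 1 else if 0 < Q x z then ε else 0

lemma localBump_nonneg (hε : 0 ≤ ε) (z : X) : 0 ≤ localBump Q x ε z := by
  unfold localBump
  split_ifs <;> simp [hε]

variable [Fintype X] {π : X → ℝ}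

lemma sum_localBump_mul_le (hε : 0 ≤ ε) {w : X → ℝ} (hw : ∀ z, 0 ≤ w z) :
    ∑ z, localBump Q x ε z * w z ≤ w x + ε * ∑ y, if 0 < Q x y then w y else 0 := by
  have hpoint : ∀ z, localBump Q x ε z * w z ≤
      (if z = x then w z else 0) + ε * if 0 < Q x z then w z else 0 := fun z => by
    unfold localBump
    split_ifs <;> nlinarith [hw z]
  calc ∑ z, localBump Q x ε z * w z
      ≤ ∑ z, ((if z = x then w z else 0) + ε * if 0 < Q x z then w z else 0) :=
        sum_le_sum fun z _ => hpoint z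
    _ = w x + ε * ∑ y, if 0 < Q x y then w y else 0 := by
        rw [sum_add_distrib, sum_ite_eq', if_pos (mem_univ x), mul_sum]

noncomputable def localMass (Q : X → X → ℝ) (π : X → ℝ) (x : X) (ε : ℝ) : ℝ :=
  ∑ z, localBump Q x ε z * π z

noncomputable def localDensity (Q : X → X → ℝ) (π : X → ℝ) (x : X) (ε : ℝ) (z : X) : ℝ :=
  (localMass Q π x ε)⁻¹ * localBump Q x ε z

lemma localMass_nonneg (hπ : ∀ z, 0 ≤ π z) (hε : 0 ≤ ε) : 0 ≤ localMass Q π x ε :=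
  sum_nonneg fun z _ => mul_nonneg (localBump_nonneg hε z) (hπ z)

lemma localMass_pos (hπ : ∀ z, 0 ≤ π z) (hπx : 0 < π x) (hε : 0 ≤ ε) :
    0 < localMass Q π x ε := by
  refine lt_of_lt_of_le ?_ (single_le_sum (fun z _ => mul_nonneg (localBump_nonneg hε z) (hπ z))
    (mem_univ x))
  simpa [localBump] using hπx

lemma localDensity_nonneg (hπ : ∀ z, 0 ≤ π z) (hε : 0 ≤ ε) (z : X) :
    0 ≤ localDensity Q π x ε z :=
  mul_nonneg (inv_nonneg.mpr (localMass_nonneg hπ hε)) (localBump_nonneg hε z)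

lemma sum_localDensity_mul_eq_one (hπ : ∀ z, 0 ≤ π z) (hπx : 0 < π x) (hε : 0 ≤ ε) :
    ∑ z, localDensity Q π x ε z * π z = 1 := by
  simp only [localDensity, mul_assoc, ← mul_sum]
  exact inv_mul_cancel₀ (localMass_pos hπ hπx hε).ne'

lemma logMean_localDensity (hπ : ∀ z, 0 ≤ π z) (hπx : 0 < π x) (hε : 0 ≤ ε) {y : X}
    (hy : y ≠ x) (hxy : 0 < Q x y) :
    logMean (localDensity Q π x ε x) (localDensity Q π x ε y) =
      (localMass Q π x ε)⁻¹ * logMean 1 ε := by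
  simp only [localDensity, logMean_mul_mul (inv_ne_zero (localMass_pos hπ hπx hε).ne')]
  simp [localBump, hy, hxy]

lemma logMeanEnergy_heat_localDensity_le (hQ : ∀ x y, 0 ≤ Q x y) (hπ : ∀ z, 0 ≤ π z)
    (hrev : ∀ x y, Q x y * π x = Q y x * π y) {t : ℝ} (ht : 0 ≤ t) (hε : 0 ≤ ε) (f : X → ℝ) :
    logMeanEnergy Q π (heat Q t (localDensity Q π x ε)) f ≤
      1 / 2 * ((localMass Q π x ε)⁻¹ * (heat Q t (gam Q f) x * π x +
        ε * ∑ y, if 0 < Q x y then heat Q t (gam Q f) y * π y else 0)) := by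
  have hPΓ : ∀ y, 0 ≤ heat Q t (gam Q f) y * π y := fun y =>
    mul_nonneg (heat_nonneg hQ ht (gam_nonneg hQ f) y) (hπ y)
  calc logMeanEnergy Q π (heat Q t (localDensity Q π x ε)) f
      ≤ 1 / 2 * ∑ u, heat Q t (localDensity Q π x ε) u * gam Q f u * π u :=
        logMeanEnergy_le_half_sum_mul_gam hQ hπ hrev
          (heat_nonneg hQ ht (localDensity_nonneg hπ hε)) f
    _ = 1 / 2 * ((localMass Q π x ε)⁻¹ *
          ∑ u, localBump Q x ε u * (heat Q t (gam Q f) u * π u)) := by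
        rw [sum_heat_mul_mul_eq hrev]
        simp only [localDensity, mul_sum, mul_assoc]
    _ ≤ _ := by
        have hS := localMass_nonneg (Q := Q) (x := x) hπ hε
        gcongr
        exact sum_localBump_mul_le hε hPΓ

end LocalDensity

theorem local_gradient_estimate_general
    {X : Type*} [Fintype X] [DecidableEq X] (Q : X → X → ℝ) (π : X → ℝ) (κ : ℝ)
    (hQ0 : ∀ x y, 0 ≤ Q x y)
    (hπpos : ∀ x, 0 < π x)
    (hrev : ∀ x y, Q x y * π x = Q y x * π y)
    (hGE : ∀ ρ : X → ℝ, (∀ z, 0 ≤ ρ z) → ∑ z, ρ z * π z = 1 → ∀ f : X → ℝ, ∀ t : ℝ, 0 ≤ t →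
      (1 / 2) * ∑ u, ∑ v,
          (heat Q t f v - heat Q t f u) ^ 2 * logMean (ρ u) (ρ v) * Q u v * π u ≤
        Real.exp (-2 * κ * t) * ((1 / 2) * ∑ u, ∑ v,
          (f v - f u) ^ 2 * logMean (heat Q t ρ u) (heat Q t ρ v) * Q u v * π u)) :
    ∀ x : X, ∀ f : X → ℝ, ∀ t : ℝ, 0 ≤ t → ∀ ε : ℝ, 0 < ε →
      gam Q (heat Q t f) x * π x ≤
        Real.exp (-2 * κ * t) / (2 * logMean 1 ε) *
          (heat Q t (gam Q f) x * π x +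
            ε * ∑ y, if 0 < Q x y then heat Q t (gam Q f) y * π y else 0) := by
  intro x f t ht ε hε
  have hπ : ∀ z, 0 ≤ π z := fun z => (hπpos z).le
  set S := localMass Q π x ε
  have hS : 0 < S := localMass_pos hπ (hπpos x) hε.le
  have hθ : 0 < logMean 1 ε := logMean_pos one_pos hε
  have hlower : gam Q (heat Q t f) x * π x * (S⁻¹ * logMean 1 ε) ≤
      logMeanEnergy Q π (localDensity Q π x ε) (heat Q t f) :=
    gam_mul_mul_le_logMeanEnergy hQ0 hπ hrev (localDensity_nonneg hπ hε.le)
      (fun _ hy hxy => logMean_localDensity hπ (hπpos x) hε.le hy hxy) _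
  have key := hlower.trans ((hGE _ (localDensity_nonneg hπ hε.le)
    (sum_localDensity_mul_eq_one hπ (hπpos x) hε.le) f t ht).trans
    (mul_le_mul_of_nonneg_left (logMeanEnergy_heat_localDensity_le hQ0 hπ hrev ht hε.le f)
      (Real.exp_pos _).le))
  set B := heat Q t (gam Q f) x * π x +
    ε * ∑ y, if 0 < Q x y then heat Q t (gam Q f) y * π y else 0
  rw [div_mul_eq_mul_div, le_div_iff₀ (by positivity)]
  calc gam Q (heat Q t f) x * π x * (2 * logMean 1 ε)
      = 2 * S * (gam Q (heat Q t f) x * π x * (S⁻¹ * logMean 1 ε)) := by field_simp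
    _ ≤ 2 * S * (Real.exp (-2 * κ * t) * (1 / 2 * (S⁻¹ * B))) := by gcongr
    _ = Real.exp (-2 * κ * t) * B := by field_simp

/-- **Local gradient estimate** derived from the global gradient estimate with the
logarithmic mean: for every `x`, `f`, `t ≥ 0` and `ε > 0`,
`Γ(P_t f)(x)·π(x) ≤ (e^{-2κt}/(2θ(1,ε)))·[P_tΓ(f)(x)·π(x) + ε·Σ_{y∈N(x)} P_tΓ(f)(y)·π(y)]`. -/
theorem local_gradient_estimate
    {X : Type*} [Fintype X] [DecidableEq X] (Q : X → X → ℝ) (π : X → ℝ) (κ : ℝ)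
    (hQ0 : ∀ x y, 0 ≤ Q x y) (hQ1 : ∀ x, ∑ y, Q x y = 1)
    (hπpos : ∀ x, 0 < π x) (hπ1 : ∑ x, π x = 1)
    (hrev : ∀ x y, Q x y * π x = Q y x * π y)
    (hirr : ∀ x y, ∃ n : ℕ, 0 < ((Matrix.of Q) ^ n) x y)
    (hGE : ∀ ρ : X → ℝ, (∀ z, 0 ≤ ρ z) → ∑ z, ρ z * π z = 1 → ∀ f : X → ℝ, ∀ t : ℝ, 0 ≤ t →
      (1 / 2) * ∑ u, ∑ v,
          (heat Q t f v - heat Q t f u) ^ 2 * logMean (ρ u) (ρ v) * Q u v * π u ≤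
        Real.exp (-2 * κ * t) * ((1 / 2) * ∑ u, ∑ v,
          (f v - f u) ^ 2 * logMean (heat Q t ρ u) (heat Q t ρ v) * Q u v * π u)) :
    ∀ x : X, ∀ f : X → ℝ, ∀ t : ℝ, 0 ≤ t → ∀ ε : ℝ, 0 < ε →
      gam Q (heat Q t f) x * π x ≤
        Real.exp (-2 * κ * t) / (2 * logMean 1 ε) *
          (heat Q t (gam Q f) x * π x +
            ε * ∑ y, if 0 < Q x y then heat Q t (gam Q f) y * π y else 0) :=
  local_gradient_estimate_general Q π κ hQ0 hπpos hrev hGE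
end

section
/- Let X be a finite set and Q an irreducible, reversible Markov kernel on X with stationary measure π. Assume the global gradient estimate with the ARITHMETIC mean and constant κ holds: for all probability densities ρ ∈ D(X), all f : X → ℝ and all t ≥ 0, (1/2)·Σ_{u,v} (P_t f(v) − P_t f(u))² · ((ρ(u)+ρ(v))/2) · Q(u,v) π(u) ≤ e^{−2κt} · (1/2)·Σ_{u,v} (f(v) − f(u))² · ((P_t ρ(u)+P_t ρ(v))/2) · Q(u,v) π(u). Then the Bakry–Émery pointwise gradient estimate holds: for all f : X → ℝ, x ∈ X and t ≥ 0, Γ(P_t f)(x) ≤ e^{−2κt} · P_t Γ(f)(x). -/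
/-!
Test the arithmetic-mean gradient estimate against the normalized Dirac density `ρ = 𝟙_x / π(x)`.
Since `θ(a, b) = (a + b)/2` is linear, reversibility turns the weighted Dirichlet form
`½ Σ_{u,v} (g(v) - g(u))² θ(w(u), w(v)) Q(u,v) π(u)` into `Σ_u w(u) Γ(g)(u) π(u)`.
For `w = ρ` the left side becomes `Γ(P_t f)(x)`; for `w = P_t ρ` the right side becomes
`P_t Γ(f)(x)`, because `P_t` is self-adjoint in `ℓ²(π)`.
-/

open Matrix NormedSpace

theorem Matrix.exp_detailed_balance_s4 {m 𝔸 : Type*} [Fintype m] [DecidableEq m]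
    [NormedCommRing 𝔸] [NormedAlgebra ℚ 𝔸] [CompleteSpace 𝔸] {π : m → 𝔸} {M : Matrix m m 𝔸}
    (hM : ∀ u v, π u * M u v = π v * M v u) (u v : m) :
    π u * exp M u v = π v * exp M v u := by
  have hsemi : SemiconjBy (diagonal π) M Mᵀ := by
    ext u v
    simp [diagonal_mul, mul_diagonal, hM u v, mul_comm]
  -- Matrices carry no global norm; the ℓ∞ operator norm induces the entrywise topology of `exp`.
  have hexp : diagonal π * exp M = exp Mᵀ * diagonal π :=
    @SemiconjBy.exp_right _ Matrix.linftyOpNormedRing Matrix.linftyOpNormedAlgebra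
      (by exact instCompleteSpace m m 𝔸) _ _ _ hsemi
  have := congrFun₂ hexp u v
  rwa [exp_transpose, diagonal_mul, mul_diagonal, transpose_apply, mul_comm _ (π v)] at this

section Reversible

variable {X : Type*} [Fintype X] {Q : X → X → ℝ} {π : X → ℝ}

theorem sum_heat_mul_eq_sum_mul_heat [DecidableEq X] (hrev : ∀ x y, Q x y * π x = Q y x * π y)
    (t : ℝ) (g h : X → ℝ) :
    ∑ u, heat Q t g u * h u * π u = ∑ u, g u * heat Q t h u * π u := by
  unfold heat
  set M := t • (Matrix.of fun x y => Q x y - if x = y then (1 : ℝ) else 0) with hMdef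
  have hM : ∀ u v, π u * M u v = π v * M v u := by
    intro u v
    by_cases huv : u = v
    · rw [huv]
    · simp only [hMdef, Matrix.smul_apply, of_apply, smul_eq_mul, huv, Ne.symm huv, if_false,
        sub_zero]
      linear_combination t * hrev u v
  simp only [mulVec, dotProduct, Finset.sum_mul, Finset.mul_sum]
  rw [Finset.sum_comm]
  refine Finset.sum_congr rfl fun v _ => Finset.sum_congr rfl fun u _ => ?_
  linear_combination g v * h u * exp_detailed_balance_s4 hM u v

theorem sum_sq_sub_mul_arithMean_eq_sum_mul_gam (hrev : ∀ x y, Q x y * π x = Q y x * π y)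
    (g w : X → ℝ) :
    ∑ u, ∑ v, (g v - g u) ^ 2 * ((w u + w v) / 2) * Q u v * π u
      = ∑ u, w u * (π u * gam Q g u) := by
  have hswap : ∑ u, ∑ v, (g v - g u) ^ 2 * w v * Q u v * π u
      = ∑ u, ∑ v, (g v - g u) ^ 2 * w u * Q u v * π u := by
    rw [Finset.sum_comm]
    refine Finset.sum_congr rfl fun u _ => Finset.sum_congr rfl fun v _ => ?_
    linear_combination (g u - g v) ^ 2 * w u * hrev v u
  calc ∑ u, ∑ v, (g v - g u) ^ 2 * ((w u + w v) / 2) * Q u v * π u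
      = (∑ u, ∑ v, (g v - g u) ^ 2 * w u * Q u v * π u
          + ∑ u, ∑ v, (g v - g u) ^ 2 * w v * Q u v * π u) / 2 := by
        rw [← Finset.sum_add_distrib, Finset.sum_div]
        refine Finset.sum_congr rfl fun u _ => ?_
        rw [← Finset.sum_add_distrib, Finset.sum_div]
        exact Finset.sum_congr rfl fun v _ => by ring
    _ = ∑ u, w u * (π u * gam Q g u) := by
        rw [hswap, add_self_div_two]
        simp only [gam, Finset.mul_sum]
        exact Finset.sum_congr rfl fun u _ => Finset.sum_congr rfl fun v _ => by ring

end Reversible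

section Dirac

variable {X : Type*} [DecidableEq X]

noncomputable def diracDensity (π : X → ℝ) (x : X) : X → ℝ :=
  Pi.single x (π x)⁻¹

variable {π : X → ℝ} {x : X}

theorem diracDensity_nonneg (hπ : 0 ≤ π x) (z : X) : 0 ≤ diracDensity π x z := by
  unfold diracDensity
  by_cases hz : z = x
  · rw [hz, Pi.single_eq_same]
    exact inv_nonneg.mpr hπ
  · rw [Pi.single_eq_of_ne hz]

variable [Fintype X]

theorem sum_diracDensity_mul (hπ : π x ≠ 0) (a : X → ℝ) :
    ∑ u, diracDensity π x u * (π u * a u) = a x := by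
  simp [diracDensity, Pi.single_apply, inv_mul_cancel_left₀ hπ]

theorem sum_heat_diracDensity_mul {Q : X → X → ℝ} (hrev : ∀ x y, Q x y * π x = Q y x * π y)
    (hπ : π x ≠ 0) (t : ℝ) (a : X → ℝ) :
    ∑ u, heat Q t (diracDensity π x) u * (π u * a u) = heat Q t a x := by
  calc ∑ u, heat Q t (diracDensity π x) u * (π u * a u)
      = ∑ u, diracDensity π x u * (π u * heat Q t a u) := by
        simpa only [mul_comm, mul_left_comm] using sum_heat_mul_eq_sum_mul_heat hrev t _ a
    _ = heat Q t a x := sum_diracDensity_mul hπ _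

end Dirac

theorem arithmetic_gradient_estimate_implies_bakry_emery_general
    {X : Type*} [Fintype X] [DecidableEq X] (Q : X → X → ℝ) (π : X → ℝ) (κ : ℝ)
    (hπpos : ∀ x, 0 < π x)
    (hrev : ∀ x y, Q x y * π x = Q y x * π y)
    (hGE : ∀ ρ : X → ℝ, (∀ z, 0 ≤ ρ z) → ∑ z, ρ z * π z = 1 → ∀ f : X → ℝ, ∀ t : ℝ, 0 ≤ t →
      (1 / 2) * ∑ u, ∑ v,
          (heat Q t f v - heat Q t f u) ^ 2 * ((ρ u + ρ v) / 2) * Q u v * π u ≤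
        Real.exp (-2 * κ * t) * ((1 / 2) * ∑ u, ∑ v,
          (f v - f u) ^ 2 * ((heat Q t ρ u + heat Q t ρ v) / 2) * Q u v * π u)) :
    ∀ f : X → ℝ, ∀ x : X, ∀ t : ℝ, 0 ≤ t →
      gam Q (heat Q t f) x ≤ Real.exp (-2 * κ * t) * heat Q t (gam Q f) x := by
  intro f x t ht
  have hπx : π x ≠ 0 := (hπpos x).ne'
  have hmass : ∑ z, diracDensity π x z * π z = 1 := by
    simpa using sum_diracDensity_mul hπx (fun _ => (1 : ℝ))
  have key := hGE _ (diracDensity_nonneg (hπpos x).le) hmass f t ht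
  rw [sum_sq_sub_mul_arithMean_eq_sum_mul_gam hrev, sum_sq_sub_mul_arithMean_eq_sum_mul_gam hrev,
    sum_diracDensity_mul hπx, sum_heat_diracDensity_mul hrev hπx] at key
  linarith

/-- The global gradient estimate with the **arithmetic mean** implies the
**Bakry–Émery pointwise gradient estimate** `Γ(P_t f)(x) ≤ e^{-2κt}·P_tΓ(f)(x)`. -/
theorem arithmetic_gradient_estimate_implies_bakry_emery
    {X : Type*} [Fintype X] [DecidableEq X] (Q : X → X → ℝ) (π : X → ℝ) (κ : ℝ)
    (hQ0 : ∀ x y, 0 ≤ Q x y) (hQ1 : ∀ x, ∑ y, Q x y = 1)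
    (hπpos : ∀ x, 0 < π x) (hπ1 : ∑ x, π x = 1)
    (hrev : ∀ x y, Q x y * π x = Q y x * π y)
    (hirr : ∀ x y, ∃ n : ℕ, 0 < ((Matrix.of Q) ^ n) x y)
    (hGE : ∀ ρ : X → ℝ, (∀ z, 0 ≤ ρ z) → ∑ z, ρ z * π z = 1 → ∀ f : X → ℝ, ∀ t : ℝ, 0 ≤ t →
      (1 / 2) * ∑ u, ∑ v,
          (heat Q t f v - heat Q t f u) ^ 2 * ((ρ u + ρ v) / 2) * Q u v * π u ≤
        Real.exp (-2 * κ * t) * ((1 / 2) * ∑ u, ∑ v,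
          (f v - f u) ^ 2 * ((heat Q t ρ u + heat Q t ρ v) / 2) * Q u v * π u)) :
    ∀ f : X → ℝ, ∀ x : X, ∀ t : ℝ, 0 ≤ t →
      gam Q (heat Q t f) x ≤ Real.exp (-2 * κ * t) * heat Q t (gam Q f) x :=
  arithmetic_gradient_estimate_implies_bakry_emery_general Q π κ hπpos hrev hGE
end

section
/- Let Q^n be the n-dimensional discrete hypercube graph (vertex set {0,1}^n, edges between vertices differing in exactly one coordinate), with simple random walk kernel Q(x,y) = 1/n for y ∼ x and uniform stationary measure π ≡ 2^{−n}, and let θ be the logarithmic mean. Then the global gradient estimate holds with constant κ = 2/n: for all probability densities ρ ∈ D({0,1}^n), all f : {0,1}^n → ℝ and all t ≥ 0, (1/2)·Σ_{u,v} (P_t f(v) − P_t f(u))² θ(ρ(u),ρ(v)) Q(u,v) π(u) ≤ e^{−4t/n} · (1/2)·Σ_{u,v} (f(v) − f(u))² θ(P_t ρ(u), P_t ρ(v)) Q(u,v) π(u). -/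
/-!
The heat semigroup of the hypercube is the Bonami–Beckner noise operator `T_c` with
`c = exp (-2 t / n)`: both are diagonalised by the Walsh characters `χ_S`, with eigenvalues
`exp (-2 t |S| / n) = c ^ |S|`. Both Dirichlet forms split into sums over the directions `i`.
In direction `i` the gradient `f ∘ flipAt i - f` is odd under `flipAt i`, and `T_c` maps it to
`c` times its average under the kernel that keeps coordinate `i` fixed. Jensen's inequality
bounds the square of that average, and the joint concavity of the logarithmic mean (from
`θ(a, b) = ∫₀¹ a ^ s b ^ (1 - s) ds` and Hölder's inequality) moves the average inside `θ`.
This leaves the factor `c ^ 2 = exp (-4 t / n)`.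
-/

open Finset Matrix

section LogMean

open Real MeasureTheory intervalIntegral

lemma logMean_nonneg_s14 {x y : ℝ} (hx : 0 ≤ x) (hy : 0 ≤ y) : 0 ≤ logMean x y := by
  unfold logMean
  split_ifs with h0 hxy
  · exact le_rfl
  · exact hx
  · simp only [not_or] at h0
    have hx' := hx.lt_of_ne' h0.1
    have hy' := hy.lt_of_ne' h0.2
    rcases lt_or_gt_of_ne hxy with h | h
    · exact div_nonneg_of_nonpos (by linarith) (by linarith [log_lt_log hx' h])
    · exact div_nonneg (by linarith) (by linarith [log_lt_log hy' h])

lemma logMean_comm_s14 (x y : ℝ) : logMean x y = logMean y x := by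
  unfold logMean
  simp only [or_comm, eq_comm (a := x)]
  split_ifs with h0 hxy
  · rfl
  · exact hxy.symm
  · rw [← neg_sub y x, ← neg_sub (log y), neg_div_neg_eq]

lemma rpow_mul_rpow_eq_zero {x y s : ℝ} (h : x = 0 ∨ y = 0) (hs : s ∈ Set.Ioo 0 1) :
    x ^ s * y ^ (1 - s) = 0 := by
  rcases h with rfl | rfl
  · rw [zero_rpow hs.1.ne', zero_mul]
  · rw [zero_rpow (sub_pos.2 hs.2).ne', mul_zero]

lemma intervalIntegrable_rpow_mul_rpow {x y : ℝ} (hx : 0 ≤ x) (hy : 0 ≤ y) :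
    IntervalIntegrable (fun s => x ^ s * y ^ (1 - s)) volume 0 1 := by
  by_cases h0 : x = 0 ∨ y = 0
  · rw [intervalIntegrable_iff_integrableOn_Ioo_of_le zero_le_one]
    exact integrableOn_zero.congr_fun (fun s hs => (rpow_mul_rpow_eq_zero h0 hs).symm)
      measurableSet_Ioo
  · simp only [not_or] at h0
    have hx' := hx.lt_of_ne' h0.1
    have hy' := hy.lt_of_ne' h0.2
    exact Continuous.intervalIntegrable (by fun_prop (disch := positivity)) 0 1

lemma logMean_eq_integral {x y : ℝ} (hx : 0 ≤ x) (hy : 0 ≤ y) :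
    logMean x y = ∫ s in (0 : ℝ)..1, x ^ s * y ^ (1 - s) := by
  by_cases h0 : x = 0 ∨ y = 0
  · rw [logMean, if_pos h0, integral_of_le zero_le_one, integral_Ioc_eq_integral_Ioo,
      setIntegral_congr_fun measurableSet_Ioo (fun s hs => rpow_mul_rpow_eq_zero h0 hs),
      integral_zero]
  simp only [not_or] at h0
  have hx' := hx.lt_of_ne' h0.1
  have hy' := hy.lt_of_ne' h0.2
  rw [logMean, if_neg (by tauto)]
  split_ifs with hxy
  · subst hxy
    simp [← rpow_add hx']
  · have hc : log x - log y ≠ 0 := sub_ne_zero.2 fun h => hxy (log_injOn_pos hx' hy' h)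
    have hexp : ∀ s : ℝ, x ^ s * y ^ (1 - s) = y * exp (s * (log x - log y)) := by
      intro s
      rw [rpow_def_of_pos hx', rpow_def_of_pos hy', mul_comm y, ← exp_log hy', ← exp_add,
        ← exp_add, log_exp]
      ring_nf
    have hint := integral_comp_mul_right exp hc (a := 0) (b := 1)
    simp only [zero_mul, one_mul, integral_exp, exp_zero, smul_eq_mul] at hint
    simp_rw [hexp, intervalIntegral.integral_const_mul, hint, exp_sub, exp_log hx', exp_log hy']
    field_simp

lemma logMean_mul {c x y : ℝ} (hc : 0 ≤ c) (hx : 0 ≤ x) (hy : 0 ≤ y) :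
    logMean (c * x) (c * y) = c * logMean x y := by
  rw [logMean_eq_integral (mul_nonneg hc hx) (mul_nonneg hc hy), logMean_eq_integral hx hy,
    ← intervalIntegral.integral_const_mul]
  refine integral_congr_ae (Filter.Eventually.of_forall fun s _ => ?_)
  have hcc : c ^ s * c ^ (1 - s) = c := by
    rw [← rpow_add' hc (by norm_num), add_sub_cancel, rpow_one]
  rw [mul_rpow hc hx, mul_rpow hc hy]
  linear_combination x ^ s * y ^ (1 - s) * hcc

-- Hölder's inequality with the exponents `1 / s` and `1 / (1 - s)`.
lemma sum_rpow_mul_rpow_le {ι : Type*} (t : Finset ι) {x y : ι → ℝ} (hx : ∀ i ∈ t, 0 ≤ x i)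
    (hy : ∀ i ∈ t, 0 ≤ y i) {s : ℝ} (hs : s ∈ Set.Ioo 0 1) :
    ∑ i ∈ t, x i ^ s * y i ^ (1 - s) ≤ (∑ i ∈ t, x i) ^ s * (∑ i ∈ t, y i) ^ (1 - s) := by
  have hs' : 1 - s ≠ 0 := (sub_pos.2 hs.2).ne'
  have := inner_le_Lp_mul_Lq_of_nonneg t (HolderConjugate.inv_one_sub_inv hs.1 hs.2)
    (fun i hi => rpow_nonneg (hx i hi) s) (fun i hi => rpow_nonneg (hy i hi) (1 - s))
  simpa [sum_congr rfl fun i hi => rpow_rpow_inv (hx i hi) hs.1.ne',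
    sum_congr rfl fun i hi => rpow_rpow_inv (hy i hi) hs'] using this

lemma sum_logMean_le {ι : Type*} (t : Finset ι) {x y : ι → ℝ} (hx : ∀ i ∈ t, 0 ≤ x i)
    (hy : ∀ i ∈ t, 0 ≤ y i) :
    ∑ i ∈ t, logMean (x i) (y i) ≤ logMean (∑ i ∈ t, x i) (∑ i ∈ t, y i) := by
  rw [sum_congr rfl fun i hi => logMean_eq_integral (hx i hi) (hy i hi),
    logMean_eq_integral (sum_nonneg hx) (sum_nonneg hy),
    ← integral_finsetSum fun i hi => intervalIntegrable_rpow_mul_rpow (hx i hi) (hy i hi)]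
  refine integral_mono_on_of_le_Ioo zero_le_one ?_ ?_ fun s hs =>
    sum_rpow_mul_rpow_le t hx hy hs
  · simpa only [Finset.sum_fn] using
      IntervalIntegrable.sum t fun i hi => intervalIntegrable_rpow_mul_rpow (hx i hi) (hy i hi)
  · exact intervalIntegrable_rpow_mul_rpow (sum_nonneg hx) (sum_nonneg hy)

-- Joint concavity of the logarithmic mean, in the form of Jensen's inequality.
lemma sum_mul_logMean_le {ι : Type*} (t : Finset ι) {w x y : ι → ℝ} (hw : ∀ i ∈ t, 0 ≤ w i)
    (hx : ∀ i ∈ t, 0 ≤ x i) (hy : ∀ i ∈ t, 0 ≤ y i) :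
    ∑ i ∈ t, w i * logMean (x i) (y i) ≤
      logMean (∑ i ∈ t, w i * x i) (∑ i ∈ t, w i * y i) := by
  rw [← sum_congr rfl fun i hi => logMean_mul (hw i hi) (hx i hi) (hy i hi)]
  exact sum_logMean_le t (fun i hi => mul_nonneg (hw i hi) (hx i hi))
    (fun i hi => mul_nonneg (hw i hi) (hy i hi))

end LogMean

noncomputable def hypercubeKernel (ι : Type*) [Fintype ι] (u v : ι → Bool) : ℝ :=
  if hammingDist u v = 1 then (Fintype.card ι : ℝ)⁻¹ else 0

noncomputable def hypercubeGenerator (ι : Type*) [Fintype ι] [DecidableEq ι] :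
    Matrix (ι → Bool) (ι → Bool) ℝ :=
  Matrix.of fun u v => hypercubeKernel ι u v - if u = v then 1 else 0

section Hypercube

variable {c : ℝ}

noncomputable def noiseFactor (c : ℝ) (b b' : Bool) : ℝ :=
  if b = b' then (1 + c) / 2 else (1 - c) / 2

lemma noiseFactor_nonneg (hc : |c| ≤ 1) (b b' : Bool) : 0 ≤ noiseFactor c b b' := by
  have := abs_le.1 hc
  unfold noiseFactor
  split_ifs <;> linarith

lemma noiseFactor_not_left (b b' : Bool) : noiseFactor c (!b) b' = noiseFactor c b (!b') := by
  cases b <;> cases b' <;> rfl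

lemma sum_noiseFactor (b : Bool) : ∑ b', noiseFactor c b b' = 1 := by
  cases b <;> simp [noiseFactor] <;> ring

variable {ι : Type*}

section Flip

variable [DecidableEq ι]

def flipAt (i : ι) (u : ι → Bool) : ι → Bool := Function.update u i (!u i)

@[simp] lemma flipAt_apply_self (i : ι) (u : ι → Bool) : flipAt i u i = !u i := by
  simp [flipAt]

lemma flipAt_apply_of_ne {i j : ι} (u : ι → Bool) (h : j ≠ i) : flipAt i u j = u j := by
  simp [flipAt, h]

@[simp] lemma flipAt_flipAt (i : ι) (u : ι → Bool) : flipAt i (flipAt i u) = u := by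
  ext j
  by_cases h : j = i
  · subst h; simp
  · simp [flipAt_apply_of_ne _ h]

lemma flipAt_left_injective (u : ι → Bool) : Function.Injective fun i => flipAt i u := by
  intro i j h
  by_contra hij
  have := congr_fun h i
  simp [flipAt_apply_of_ne u hij] at this

end Flip

variable [Fintype ι]

/-- The Bonami–Beckner noise operator `T_c`: each coordinate is independently kept with
probability `(1 + c) / 2` and flipped otherwise. -/
noncomputable def noiseKernel (c : ℝ) : Matrix (ι → Bool) (ι → Bool) ℝ :=
  Matrix.of fun u v => ∏ i, noiseFactor c (u i) (v i)

lemma noiseKernel_apply (u v : ι → Bool) : noiseKernel c u v = ∏ i, noiseFactor c (u i) (v i) :=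
  rfl

lemma noiseKernel_nonneg (hc : |c| ≤ 1) (u v : ι → Bool) : 0 ≤ noiseKernel c u v :=
  prod_nonneg fun _ _ => noiseFactor_nonneg hc _ _

variable [DecidableEq ι]

lemma sum_noiseKernel (u : ι → Bool) : ∑ v, noiseKernel c u v = 1 := by
  simp_rw [noiseKernel_apply]
  rw [← Fintype.prod_sum (fun i b => noiseFactor c (u i) b)]
  simp only [sum_noiseFactor, prod_const_one]

lemma sum_comp_flipAt {M : Type*} [AddCommMonoid M] (i : ι) (g : (ι → Bool) → M) :
    ∑ u, g (flipAt i u) = ∑ u, g u :=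
  Equiv.sum_comp (Function.Involutive.toPerm _ (flipAt_flipAt i)) g

lemma hammingDist_eq_one_iff_exists_flipAt {u v : ι → Bool} :
    hammingDist u v = 1 ↔ ∃ i, flipAt i u = v := by
  simp only [hammingDist, card_eq_one, Finset.ext_iff, mem_filter, mem_univ, true_and,
    mem_singleton]
  refine exists_congr fun i => ⟨fun h => funext fun j => ?_, ?_⟩
  · by_cases hj : j = i
    · subst hj
      rw [flipAt_apply_self, eq_comm]
      exact Bool.eq_not.2 (Ne.symm ((h j).2 rfl))
    · rw [flipAt_apply_of_ne u hj]; simpa [hj] using h j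
  · rintro rfl j
    by_cases hj : j = i
    · subst hj; simp
    · simp [flipAt_apply_of_ne u hj, hj]

lemma sum_hypercubeKernel_mul (u : ι → Bool) (g : (ι → Bool) → ℝ) :
    ∑ v, hypercubeKernel ι u v * g v = (Fintype.card ι : ℝ)⁻¹ * ∑ i, g (flipAt i u) := by
  have himage : univ.filter (fun v => hammingDist u v = 1) = univ.image fun i => flipAt i u := by
    ext v
    simp [hammingDist_eq_one_iff_exists_flipAt]
  simp_rw [hypercubeKernel, ite_mul, zero_mul, ← sum_filter, himage,
    sum_image fun i _ j _ h => flipAt_left_injective u h, mul_sum]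

lemma sum_sum_mul_hypercubeKernel (F : (ι → Bool) → (ι → Bool) → ℝ) :
    ∑ u, ∑ v, F u v * hypercubeKernel ι u v =
      (Fintype.card ι : ℝ)⁻¹ * ∑ i, ∑ u, F u (flipAt i u) := by
  simp_rw [mul_comm (F _ _), sum_hypercubeKernel_mul, ← mul_sum]
  rw [sum_comm]

lemma noiseKernel_flipAt (i : ι) (u v : ι → Bool) :
    noiseKernel c (flipAt i u) v = noiseKernel c u (flipAt i v) := by
  refine prod_congr rfl fun j _ => ?_
  by_cases hj : j = i
  · subst hj; simp [noiseFactor_not_left]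
  · simp [flipAt_apply_of_ne _ hj]

lemma noiseKernel_mulVec_flipAt (i : ι) (g : (ι → Bool) → ℝ) (u : ι → Bool) :
    (noiseKernel c *ᵥ g) (flipAt i u) = (noiseKernel c *ᵥ (g ∘ flipAt i)) u := by
  simp only [mulVec, dotProduct, noiseKernel_flipAt, Function.comp_apply]
  rw [← sum_comp_flipAt i]
  simp

/-- `T_c` with coordinate `i` kept fixed. -/
noncomputable def noiseKernelFix (i : ι) (c : ℝ) (u v : ι → Bool) : ℝ :=
  if u i = v i then ∏ j ∈ univ.erase i, noiseFactor c (u j) (v j) else 0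

lemma noiseKernel_eq_noiseKernelFix (i : ι) (u v : ι → Bool) :
    noiseKernel c u v =
      (1 + c) / 2 * noiseKernelFix i c u v + (1 - c) / 2 * noiseKernelFix i c u (flipAt i v) := by
  have hrest : ∏ j ∈ univ.erase i, noiseFactor c (u j) (flipAt i v j) =
      ∏ j ∈ univ.erase i, noiseFactor c (u j) (v j) :=
    prod_congr rfl fun j hj => by rw [flipAt_apply_of_ne v (ne_of_mem_erase hj)]
  rw [noiseKernel_apply, ← mul_prod_erase univ _ (mem_univ i), noiseKernelFix, noiseKernelFix,
    hrest, flipAt_apply_self, noiseFactor]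
  cases u i <;> cases v i <;> simp

lemma noiseKernel_mulVec_eq (i : ι) (g : (ι → Bool) → ℝ) (u : ι → Bool) :
    (noiseKernel c *ᵥ g) u =
      ∑ v, noiseKernelFix i c u v * ((1 + c) / 2 * g v + (1 - c) / 2 * g (flipAt i v)) := by
  simp only [mulVec, dotProduct, noiseKernel_eq_noiseKernelFix i, add_mul, mul_add,
    sum_add_distrib]
  congr 1
  · exact sum_congr rfl fun v _ => by ring
  · rw [← sum_comp_flipAt i]
    exact sum_congr rfl fun v _ => by rw [flipAt_flipAt]; ring

lemma noiseKernel_mulVec_of_odd (i : ι) {g : (ι → Bool) → ℝ} (hg : ∀ v, g (flipAt i v) = -g v)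
    (u : ι → Bool) : (noiseKernel c *ᵥ g) u = c * ∑ v, noiseKernelFix i c u v * g v := by
  rw [noiseKernel_mulVec_eq i, mul_sum]
  refine sum_congr rfl fun v _ => ?_
  rw [hg]
  ring

lemma sum_noiseKernelFix_mul_of_even (i : ι) {g : (ι → Bool) → ℝ}
    (hg : ∀ v, g (flipAt i v) = g v) (u : ι → Bool) :
    ∑ v, noiseKernelFix i c u v * g v = (noiseKernel c *ᵥ g) u := by
  rw [noiseKernel_mulVec_eq i]
  refine sum_congr rfl fun v _ => ?_
  rw [hg]
  ring

lemma sum_noiseKernelFix (i : ι) (u : ι → Bool) : ∑ v, noiseKernelFix i c u v = 1 := by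
  simpa [mulVec, dotProduct, sum_noiseKernel] using
    sum_noiseKernelFix_mul_of_even (c := c) i (g := fun _ => 1) (fun _ => rfl) u

lemma noiseKernelFix_nonneg (hc : |c| ≤ 1) (i : ι) (u v : ι → Bool) :
    0 ≤ noiseKernelFix i c u v := by
  unfold noiseKernelFix
  split_ifs
  · exact prod_nonneg fun j _ => noiseFactor_nonneg hc _ _
  · exact le_rfl

lemma noiseKernelFix_comm (i : ι) (u v : ι → Bool) :
    noiseKernelFix i c u v = noiseKernelFix i c v u := by
  simp only [noiseKernelFix, eq_comm (a := u i), noiseFactor, eq_comm (a := u _)]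

theorem noiseKernel_gradient_estimate (hc : |c| ≤ 1) (i : ι) {ρ : (ι → Bool) → ℝ}
    (hρ : ∀ u, 0 ≤ ρ u) (f : (ι → Bool) → ℝ) :
    ∑ u, ((noiseKernel c *ᵥ f) (flipAt i u) - (noiseKernel c *ᵥ f) u) ^ 2 *
        logMean (ρ u) (ρ (flipAt i u)) ≤
      c ^ 2 * ∑ u, (f (flipAt i u) - f u) ^ 2 *
        logMean ((noiseKernel c *ᵥ ρ) u) ((noiseKernel c *ᵥ ρ) (flipAt i u)) := by
  set R := noiseKernelFix i c
  set g : (ι → Bool) → ℝ := fun u => f (flipAt i u) - f u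
  set θ : (ι → Bool) → ℝ := fun u => logMean (ρ u) (ρ (flipAt i u))
  have hθ : ∀ u, 0 ≤ θ u := fun u => logMean_nonneg_s14 (hρ _) (hρ _)
  -- the gradient `g` is odd under `flipAt i`, so `T_c` contracts it by the factor `c`
  have hgrad : ∀ u, (noiseKernel c *ᵥ f) (flipAt i u) - (noiseKernel c *ᵥ f) u =
      c * ∑ v, R u v * g v := by
    intro u
    rw [noiseKernel_mulVec_flipAt, ← Pi.sub_apply, ← mulVec_sub]
    exact noiseKernel_mulVec_of_odd i (fun v => by simp) u
  have hjensen : ∀ u, (∑ v, R u v * g v) ^ 2 ≤ ∑ v, R u v * g v ^ 2 := fun u =>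
    (even_two.convexOn_pow).map_sum_le (fun v _ => noiseKernelFix_nonneg hc i u v)
      (sum_noiseKernelFix i u) (fun _ _ => Set.mem_univ _)
  -- `θ` is even under `flipAt i`, so averaging it against `R` is the same as against `T_c`
  have hconcave : ∀ u, ∑ v, R u v * θ v ≤
      logMean ((noiseKernel c *ᵥ ρ) u) ((noiseKernel c *ᵥ ρ) (flipAt i u)) := by
    intro u
    rw [sum_noiseKernelFix_mul_of_even i (fun v => by simp [θ, logMean_comm_s14]),
      noiseKernel_mulVec_flipAt]
    exact sum_mul_logMean_le univ (fun v _ => noiseKernel_nonneg hc u v)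
      (fun v _ => hρ _) (fun v _ => hρ _)
  calc ∑ u, ((noiseKernel c *ᵥ f) (flipAt i u) - (noiseKernel c *ᵥ f) u) ^ 2 * θ u
      = c ^ 2 * ∑ u, (∑ v, R u v * g v) ^ 2 * θ u := by
        rw [mul_sum]
        exact sum_congr rfl fun u _ => by rw [hgrad]; ring
    _ ≤ c ^ 2 * ∑ u, (∑ v, R u v * g v ^ 2) * θ u := by
        gcongr with u
        · exact hθ u
        · exact hjensen u
    _ = c ^ 2 * ∑ v, g v ^ 2 * ∑ u, R v u * θ u := by
        have hR : ∀ u v, R u v = R v u := noiseKernelFix_comm i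
        simp_rw [sum_mul, mul_sum]
        rw [sum_comm]
        exact sum_congr rfl fun v _ => sum_congr rfl fun u _ => by rw [hR]; ring
    _ ≤ _ := by
        gcongr with v
        exact hconcave v

/-- The Walsh characters `χ_S u = (-1) ^ #{i | u i ∧ S i}`, as the columns `S` of a matrix. -/
noncomputable def walshMatrix : Matrix (ι → Bool) (ι → Bool) ℝ :=
  Matrix.of fun u S => ∏ i, if u i && S i then -1 else 1

lemma walshMatrix_mul_self :
    walshMatrix * walshMatrix =
      (2 ^ Fintype.card ι : ℝ) • (1 : Matrix (ι → Bool) (ι → Bool) ℝ) := by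
  ext u w
  simp only [mul_apply, walshMatrix, of_apply, ← prod_mul_distrib]
  rw [← Fintype.prod_sum fun i b =>
    (if u i && b then (-1 : ℝ) else 1) * if b && w i then -1 else 1]
  have hfac : ∀ i, ∑ b, ((if u i && b then (-1 : ℝ) else 1) * if b && w i then -1 else 1) =
      if u i = w i then 2 else 0 := by
    intro i
    cases u i <;> cases w i <;> norm_num
  rw [prod_congr rfl fun i _ => hfac i, Matrix.smul_apply, one_apply, smul_eq_mul]
  by_cases huw : u = w
  · simp [huw]
  · obtain ⟨i, hi⟩ := Function.ne_iff.1 huw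
    rw [prod_eq_zero (mem_univ i) (if_neg hi), if_neg huw, mul_zero]

lemma isUnit_walshMatrix : IsUnit (walshMatrix : Matrix (ι → Bool) (ι → Bool) ℝ) := by
  have h : walshMatrix * ((2 ^ Fintype.card ι : ℝ)⁻¹ • walshMatrix) =
      (1 : Matrix (ι → Bool) (ι → Bool) ℝ) := by
    rw [Matrix.mul_smul, walshMatrix_mul_self, smul_smul, inv_mul_cancel₀ (by positivity),
      one_smul]
  exact (isUnit_iff_isUnit_det _).2 (isUnit_det_of_right_inverse h)

lemma walshMatrix_flipAt (i : ι) (u S : ι → Bool) :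
    walshMatrix (flipAt i u) S = (if S i then -1 else 1) * walshMatrix u S := by
  simp only [walshMatrix, of_apply]
  rw [← mul_prod_erase univ _ (mem_univ i),
    ← mul_prod_erase univ (fun j => if u j && S j then (-1 : ℝ) else 1) (mem_univ i),
    ← mul_assoc, flipAt_apply_self,
    prod_congr rfl fun j hj => by rw [flipAt_apply_of_ne u (ne_of_mem_erase hj)]]
  congr 1
  cases u i <;> cases S i <;> simp

lemma noiseKernel_mul_walshMatrix (c : ℝ) :
    noiseKernel c * walshMatrix = walshMatrix * diagonal fun S : ι → Bool => c ^ #{i | S i} := by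
  ext u S
  rw [mul_diagonal]
  simp only [mul_apply, noiseKernel_apply, walshMatrix, of_apply, ← prod_mul_distrib]
  rw [← Fintype.prod_sum fun i b => noiseFactor c (u i) b * if b && S i then -1 else 1]
  have hfac : ∀ i, ∑ b, noiseFactor c (u i) b * (if b && S i then -1 else 1) =
      (if u i && S i then -1 else 1) * if S i then c else 1 := by
    intro i
    cases u i <;> cases S i <;> simp [noiseFactor] <;> ring
  rw [prod_congr rfl fun i _ => hfac i, prod_mul_distrib]
  congr 1
  rw [prod_ite, prod_const, prod_const_one, mul_one]

lemma hypercubeGenerator_mul_walshMatrix [Nonempty ι] :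
    hypercubeGenerator ι * walshMatrix =
      walshMatrix * diagonal fun S : ι → Bool => -2 * (#{i | S i} : ℝ) / Fintype.card ι := by
  ext u S
  have hsign : ∑ i, (if S i then (-1 : ℝ) else 1) = Fintype.card ι - 2 * #{i | S i} := by
    have h : (#{i | S i} + #{i | ¬S i} : ℝ) = Fintype.card ι := by
      exact_mod_cast card_filter_add_card_filter_not _
    rw [sum_ite, sum_const, sum_const, nsmul_eq_mul, nsmul_eq_mul]
    linarith
  have hn : (Fintype.card ι : ℝ) ≠ 0 := by positivity
  rw [mul_diagonal, mul_apply]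
  simp only [hypercubeGenerator, of_apply, sub_mul, sum_sub_distrib, sum_hypercubeKernel_mul,
    walshMatrix_flipAt, ← sum_mul, hsign]
  simp only [ite_mul, one_mul, zero_mul, sum_ite_eq, mem_univ, if_true]
  field_simp
  ring

end Hypercube

lemma Matrix.exp_eq_of_mul_eq_mul_diagonal {m : Type*} [Fintype m] [DecidableEq m]
    {A B U : Matrix m m ℝ} {d : m → ℝ} (hU : IsUnit U) (hA : A * U = U * diagonal d)
    (hB : B * U = U * diagonal fun k => Real.exp (d k)) : NormedSpace.exp A = B := by
  have hdet : IsUnit U.det := (isUnit_iff_isUnit_det U).1 hU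
  have hconj : ∀ M : Matrix m m ℝ, M = M * U * U⁻¹ := fun M =>
    (mul_nonsing_inv_cancel_right _ _ hdet).symm
  rw [hconj A, hA, exp_conj _ _ hU, exp_diagonal, hconj B, hB]
  congr 3
  ext k
  simp [Real.exp_eq_exp_ℝ]

theorem exp_smul_hypercubeGenerator {ι : Type*} [Fintype ι] [DecidableEq ι] [Nonempty ι]
    (t : ℝ) :
    NormedSpace.exp (t • hypercubeGenerator ι) =
      noiseKernel (Real.exp (-2 * t / Fintype.card ι)) := by
  refine exp_eq_of_mul_eq_mul_diagonal isUnit_walshMatrix ?_ ?_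
    (d := fun S => t * (-2 * (#{i | S i} : ℝ) / Fintype.card ι))
  · rw [Matrix.smul_mul, hypercubeGenerator_mul_walshMatrix, ← Matrix.mul_smul, ← diagonal_smul]
    rfl
  · rw [noiseKernel_mul_walshMatrix]
    congr 2
    funext S
    rw [← Real.exp_nat_mul]
    ring_nf

theorem heat_hypercubeKernel {ι : Type*} [Fintype ι] [DecidableEq ι] [Nonempty ι] (t : ℝ)
    (g : (ι → Bool) → ℝ) :
    heat (hypercubeKernel ι) t g = noiseKernel (Real.exp (-2 * t / Fintype.card ι)) *ᵥ g := by
  rw [heat, ← exp_smul_hypercubeGenerator]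
  rfl

/-- **Entropic curvature of the hypercube**: the simple random walk on the discrete
hypercube `{0,1}^n` satisfies the global gradient estimate with constant `κ = 2/n`
(i.e. `e^{-2κt} = e^{-4t/n}`), with the logarithmic mean. -/
theorem hypercube_gradient_estimate (n : ℕ) (hn : 0 < n)
    (Q : (Fin n → Bool) → (Fin n → Bool) → ℝ) (π : (Fin n → Bool) → ℝ)
    (hQ : ∀ x y, Q x y =
      if (Finset.univ.filter fun i => x i ≠ y i).card = 1 then ((n : ℝ))⁻¹ else 0)
    (hπ : ∀ x, π x = ((2 : ℝ) ^ n)⁻¹) :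
    ∀ ρ : (Fin n → Bool) → ℝ, (∀ z, 0 ≤ ρ z) → ∑ z, ρ z * π z = 1 →
      ∀ f : (Fin n → Bool) → ℝ, ∀ t : ℝ, 0 ≤ t →
        (1 / 2) * ∑ u, ∑ v,
            (heat Q t f v - heat Q t f u) ^ 2 * logMean (ρ u) (ρ v) * Q u v * π u ≤
          Real.exp (-4 * t / n) * ((1 / 2) * ∑ u, ∑ v,
            (f v - f u) ^ 2 * logMean (heat Q t ρ u) (heat Q t ρ v) * Q u v * π u) := by
  intro ρ hρ _ f t ht
  have : Nonempty (Fin n) := ⟨⟨0, hn⟩⟩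
  obtain rfl : Q = hypercubeKernel (Fin n) := by
    ext x y
    rw [hQ, hypercubeKernel, Fintype.card_fin]
    rfl
  set c := Real.exp (-2 * t / n)
  have hc : |c| ≤ 1 := by
    rw [abs_of_pos (Real.exp_pos _), Real.exp_le_one_iff]
    exact div_nonpos_of_nonpos_of_nonneg (by linarith) n.cast_nonneg
  have hc2 : c ^ 2 = Real.exp (-4 * t / n) := by
    rw [← Real.exp_nat_mul]; ring_nf
  simp_rw [heat_hypercubeKernel, hπ, ← sum_mul, sum_sum_mul_hypercubeKernel, Fintype.card_fin]
  have hsum := sum_le_sum fun i (_ : i ∈ univ) => noiseKernel_gradient_estimate hc i hρ f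
  rw [← mul_sum] at hsum
  have hk : (0 : ℝ) ≤ 1 / 2 * (n : ℝ)⁻¹ * (2 ^ n)⁻¹ := by positivity
  rw [← hc2]
  linarith [mul_le_mul_of_nonneg_left hsum hk]
end
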